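/- Let n ≥ 2 be an integer and a an integer. If the Laurent polynomial identity (1-t)^n + (1-t^{-1})^n + a·(2 - t - t^{-1})·((1-t^{-1})^{n-2} + (1-t)^{n-2}) = (2 - t - t^{-1})^n holds in ℤ[t, t^{-1}], then n = 2 and a = 1, or n = 3 and a = 3. -/

import Mathlib

/-!
Evaluating the identity at `t = -1` gives `a + 1 = 2^(n-1)`. Evaluating it at `t = 2` and
clearing denominators gives, with `m = 2^(n-1)` and `s = (-1)^n`, the relation
`2sm + 1 - a(2 + sm) = s`. Substituting `a = m - 1`, this factors as `(m - 2)(m + 1) = 0` for `n`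
even and `(m - 1)(m - 4) = 0` for `n` odd, so `m = 2` or `m = 4`.
-/

open LaurentPolynomial

def EulerCharIdentity (n : ℕ) (a : ℤ) : Prop :=
  ((1 : LaurentPolynomial ℤ) - T 1) ^ n + (1 - T (-1)) ^ n
      + (a : LaurentPolynomial ℤ) * (2 - T 1 - T (-1))
        * ((1 - T (-1)) ^ (n - 2) + (1 - T 1) ^ (n - 2))
    = (2 - T 1 - T (-1)) ^ n

namespace EulerCharIdentity

variable {n k : ℕ} {a : ℤ}

theorem eval {R : Type*} [CommRing R] (h : EulerCharIdentity n a) (u : Rˣ) :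
    ((1 : R) - u) ^ n + (1 - ↑u⁻¹) ^ n
        + (a : R) * (2 - u - ↑u⁻¹) * ((1 - ↑u⁻¹) ^ (n - 2) + (1 - u) ^ (n - 2))
      = (2 - u - ↑u⁻¹) ^ n := by
  simpa [eval₂_T, map_ofNat] using congrArg (eval₂ (Int.castRingHom R) u) h

theorem add_one_eq_two_pow (h : EulerCharIdentity (k + 2) a) : a + 1 = 2 ^ (k + 1) := by
  have h₁ := h.eval (R := ℚ) (-1)
  norm_num at h₁
  have h4 : (4 : ℚ) ^ (k + 2) = 2 ^ (k + 3) * 2 ^ (k + 1) := by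
    rw [← pow_add, show (4 : ℚ) = 2 ^ 2 by norm_num, ← pow_mul]
    ring_nf
  have : (2 : ℚ) ^ (k + 3) * (a + 1) = 2 ^ (k + 3) * 2 ^ (k + 1) := by
    rw [← h4, ← h₁]
    ring
  exact_mod_cast mul_left_cancel₀ (by positivity) this

theorem eval_two_mul_two_pow (h : EulerCharIdentity (k + 2) a) :
    2 * (-1) ^ k * 2 ^ (k + 1) + 1 - a * (2 + (-1) ^ k * 2 ^ (k + 1)) = (-1 : ℤ) ^ k := by
  have h₂ := h.eval (R := ℚ) (Units.mk0 2 two_ne_zero)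
  norm_num at h₂
  rw [neg_eq_neg_one_mul (1 / 2 : ℚ), mul_pow] at h₂
  have hinv : (1 / 2 : ℚ) ^ k * 2 ^ k = 1 := by
    rw [← mul_pow]
    norm_num
  qify
  linear_combination (4 * 2 ^ k : ℚ) * h₂ + (2 * a + (-1) ^ k - 1) * hinv

end EulerCharIdentity

theorem eq_zero_or_eq_one_of_two_pow_quadratic {k : ℕ}
    (h : 2 * (-1) ^ k * 2 ^ (k + 1) + 1 - (2 ^ (k + 1) - 1) * (2 + (-1) ^ k * 2 ^ (k + 1))
      = (-1 : ℤ) ^ k) :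
    k = 0 ∨ k = 1 := by
  have hinj : Function.Injective ((2 : ℤ) ^ · : ℕ → ℤ) :=
    pow_right_injective₀ two_pos (by norm_num)
  have hm : (2 : ℤ) ≤ 2 ^ (k + 1) := le_self_pow₀ (by norm_num) (by omega)
  rcases neg_one_pow_eq_or ℤ k with hs | hs <;> rw [hs] at h
  · have hfac : (2 ^ (k + 1) - 2) * (2 ^ (k + 1) + 1) = (0 : ℤ) := by linear_combination -h
    have : (2 : ℤ) ^ (k + 1) = 2 ^ 1 := by
      rcases mul_eq_zero.1 hfac with h' | h' <;> linarith
    left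
    have := hinj this
    omega
  · have hfac : (2 ^ (k + 1) - 1) * (2 ^ (k + 1) - 4) = (0 : ℤ) := by linear_combination h
    have : (2 : ℤ) ^ (k + 1) = 2 ^ 2 := by
      rcases mul_eq_zero.1 hfac with h' | h' <;> linarith
    right
    have := hinj this
    omega

theorem bandwidth3_isolated_fixed_points_euler_identity
    (n : ℕ) (hn : 2 ≤ n) (a : ℤ)
    (h : ((1 : LaurentPolynomial ℤ) - T 1) ^ n + (1 - T (-1)) ^ n
        + (a : LaurentPolynomial ℤ) * (2 - T 1 - T (-1))
          * ((1 - T (-1)) ^ (n - 2) + (1 - T 1) ^ (n - 2))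
        = (2 - T 1 - T (-1)) ^ n) :
    (n = 2 ∧ a = 1) ∨ (n = 3 ∧ a = 3) := by
  obtain ⟨k, rfl⟩ : ∃ k, n = k + 2 := ⟨n - 2, by omega⟩
  have h : EulerCharIdentity (k + 2) a := h
  have ha : a = 2 ^ (k + 1) - 1 := eq_sub_of_add_eq h.add_one_eq_two_pow
  have hk := h.eval_two_mul_two_pow
  rw [ha] at hk
  rcases eq_zero_or_eq_one_of_two_pow_quadratic hk with rfl | rfl
  · exact Or.inl ⟨rfl, by simpa using ha⟩
  · exact Or.inr ⟨rfl, by simpa using ha⟩
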